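/- arXiv:2604.07202 — 2 statements merged into one kernel-verified Lean document; each statement's English description precedes it below -/
import Mathlib

section
/- Let n, m ≥ 1 and let A be a symmetric real (n+m)×(n+m) block matrix A = [[A₁₁, A₂₁ᵀ],[A₂₁, A₂₂]] with A₁₁ invertible, and set S_A := A₂₂ − A₂₁A₁₁⁻¹A₂₁ᵀ. Let P be a symmetric positive definite (n+m)×(n+m) block matrix P = [[P₁₁, P₂₁ᵀ],[P₂₁, P₂₂]] (so P₁₁ is positive definite) and let S_P := P₂₂ − P₂₁P₁₁⁻¹P₂₁ᵀ be its Schur complement, which is symmetric positive definite. Assume there exist constants c₁, c₂, c_l > 0 such that: (i) |xᵀAy| ≤ c₁‖x‖_P‖y‖_P for all x, y ∈ ℝ^{n+m}; (ii) for every x ∈ ℝ^{n+m} there exists y ≠ 0 with xᵀAy ≥ c₂‖x‖_P‖y‖_P; (iii) ‖(−A₁₁⁻¹A₂₁ᵀx̄, x̄)‖_P ≤ c_l‖x̄‖_{S_P} for every x̄ ∈ ℝᵐ. Then |x̄ᵀS_Aȳ| ≤ c₁c_l²‖x̄‖_{S_P}‖ȳ‖_{S_P} for all x̄, ȳ ∈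 ℝᵐ, and for every x̄ ∈ ℝᵐ there exists ȳ ≠ 0 with x̄ᵀS_Aȳ ≥ c₂‖x̄‖_{S_P}‖ȳ‖_{S_P}. -/
/-!
The lift `E x̄ = (-A₁₁⁻¹A₂₁ᵀx̄, x̄)` satisfies `A (E x̄) = (0, S_A x̄)`, so by symmetry of `A`,
`x̄ᵀ S_A ȳ = (E x̄)ᵀ A y` for every `y` whose second block is `ȳ`. Testing (i) with `E x̄, E ȳ`
and using (iii) gives the bound on `S_A`. For the inf-sup condition, apply (ii) to `E x̄` and
take the second block `ȳ` of the resulting `y`: both norms drop when passing to the Schur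
complement, because `‖(x₁, x̄)‖_P² = ‖x₁ + P₁₁⁻¹P₂₁ᵀx̄‖_{P₁₁}² + ‖x̄‖_{S_P}²`.
-/

open Matrix

/-- The norm on `k → ℝ` induced by a (positive definite) matrix `M`:
`‖x‖_M = (xᵀ M x)^{1/2}`. -/
noncomputable def mnorm {k : Type*} [Fintype k] (M : Matrix k k ℝ) (x : k → ℝ) : ℝ :=
  Real.sqrt (x ⬝ᵥ M.mulVec x)

section mnorm

variable {k : Type*} [Fintype k]

lemma mnorm_nonneg (M : Matrix k k ℝ) (x : k → ℝ) : 0 ≤ mnorm M x :=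
  Real.sqrt_nonneg _

@[simp]
lemma mnorm_zero (M : Matrix k k ℝ) : mnorm M 0 = 0 := by
  simp [mnorm]

lemma mnorm_pos {M : Matrix k k ℝ} (hM : M.PosDef) {x : k → ℝ} (hx : x ≠ 0) :
    0 < mnorm M x :=
  Real.sqrt_pos.mpr (by simpa using hM.dotProduct_mulVec_pos hx)

end mnorm

section SchurLift

variable {ι κ : Type*} [Fintype ι] [Fintype κ] [DecidableEq ι]
  {A : Matrix ι ι ℝ} {B : Matrix ι κ ℝ} {C : Matrix κ ι ℝ} {D : Matrix κ κ ℝ}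

noncomputable def schurLift (A : Matrix ι ι ℝ) (B : Matrix ι κ ℝ) (y : κ → ℝ) : ι ⊕ κ → ℝ :=
  Sum.elim (-(A⁻¹ *ᵥ (B *ᵥ y))) y

@[simp]
lemma schurLift_comp_inr (A : Matrix ι ι ℝ) (B : Matrix ι κ ℝ) (y : κ → ℝ) :
    schurLift A B y ∘ Sum.inr = y :=
  rfl

lemma schurLift_ne_zero {y : κ → ℝ} (hy : y ≠ 0) : schurLift A B y ≠ 0 :=
  fun h => hy (by rw [← schurLift_comp_inr A B y, h]; rfl)

lemma fromBlocks_mulVec_schurLift (hA : IsUnit A.det) (y : κ → ℝ) :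
    fromBlocks A B C D *ᵥ schurLift A B y = Sum.elim (0 : ι → ℝ) ((D - C * A⁻¹ * B) *ᵥ y) := by
  rw [schurLift, fromBlocks_mulVec]
  simp only [Sum.elim_comp_inl, Sum.elim_comp_inr, mulVec_neg, mulVec_mulVec,
    ← Matrix.mul_assoc, Matrix.mul_nonsing_inv _ hA, Matrix.one_mul, sub_mulVec,
    neg_add_eq_sub, sub_self]

lemma dotProduct_fromBlocks_mulVec_schurLift (hA : IsUnit A.det) (v : ι ⊕ κ → ℝ)
    (y : κ → ℝ) :
    v ⬝ᵥ fromBlocks A B C D *ᵥ schurLift A B y = (v ∘ Sum.inr) ⬝ᵥ (D - C * A⁻¹ * B) *ᵥ y := by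
  rw [fromBlocks_mulVec_schurLift hA, ← Sum.elim_comp_inl_inr v, sumElim_dotProduct_sumElim,
    dotProduct_zero, zero_add, Sum.elim_comp_inr]

omit [Fintype κ] in
lemma Matrix.IsSymm.schurComplement (hM : (Matrix.fromBlocks A B C D).IsSymm) :
    (D - C * A⁻¹ * B).IsSymm := by
  obtain ⟨hA, hBC, hCB, hD⟩ := isSymm_fromBlocks_iff.mp hM
  rw [IsSymm, transpose_sub, transpose_mul, transpose_mul, transpose_nonsing_inv, hA.eq,
    hD.eq, hBC, hCB, Matrix.mul_assoc]

lemma schurLift_dotProduct_fromBlocks_mulVec (hM : (fromBlocks A B C D).IsSymm)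
    (hA : IsUnit A.det) (x : κ → ℝ) (v : ι ⊕ κ → ℝ) :
    schurLift A B x ⬝ᵥ fromBlocks A B C D *ᵥ v = x ⬝ᵥ (D - C * A⁻¹ * B) *ᵥ (v ∘ Sum.inr) := by
  rw [← hM.eq, dotProduct_transpose_mulVec, dotProduct_fromBlocks_mulVec_schurLift hA,
    dotProduct_comm, dotProduct_mulVec, ← mulVec_transpose, hM.schurComplement.eq]

end SchurLift

lemma Matrix.PosDef.of_fromBlocks₁₁ {ι κ : Type*} {A : Matrix ι ι ℝ} {B : Matrix ι κ ℝ}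
    {C : Matrix κ ι ℝ} {D : Matrix κ κ ℝ} (hP : (Matrix.fromBlocks A B C D).PosDef) :
    A.PosDef := by
  convert hP.submatrix Sum.inl_injective
  ext i j
  rfl

section SchurNorm

variable {ι κ : Type*} [Fintype ι] [Fintype κ] [DecidableEq ι]
  {A : Matrix ι ι ℝ} {C : Matrix κ ι ℝ} {D : Matrix κ κ ℝ}

lemma mnorm_schurComplement_le (hP : (fromBlocks A Cᵀ C D).PosDef) (v : ι ⊕ κ → ℝ) :
    mnorm (D - C * A⁻¹ * Cᵀ) (v ∘ Sum.inr) ≤ mnorm (fromBlocks A Cᵀ C D) v := by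
  have hA := hP.of_fromBlocks₁₁
  have : Invertible A := invertibleOfIsUnitDet A hA.det_pos.ne'.isUnit
  have h := schur_complement_eq₁₁ Cᵀ D (v ∘ Sum.inl) (v ∘ Sum.inr) hA.1
  simp only [conjTranspose_eq_transpose_of_trivial, transpose_transpose, star_trivial,
    Sum.elim_comp_inl_inr, ← dotProduct_mulVec] at h
  apply Real.sqrt_le_sqrt
  rw [h]
  exact le_add_of_nonneg_left (hA.posSemidef.dotProduct_mulVec_nonneg _)

end SchurNorm

section SchurStability

variable {ι κ : Type*} [Fintype ι] [Fintype κ] [DecidableEq ι]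
  {A : Matrix ι ι ℝ} {B : Matrix ι κ ℝ} {C : Matrix κ ι ℝ} {D : Matrix κ κ ℝ}
  {P : Matrix (ι ⊕ κ) (ι ⊕ κ) ℝ} {Q : Matrix κ κ ℝ}

lemma abs_dotProduct_schurComplement_mulVec_le (hA : IsUnit A.det) {c₁ cl : ℝ}
    (hc₁ : 0 ≤ c₁) (hcl : 0 ≤ cl)
    (hbound : ∀ x y, |x ⬝ᵥ fromBlocks A B C D *ᵥ y| ≤ c₁ * mnorm P x * mnorm P y)
    (hup : ∀ y, mnorm P (schurLift A B y) ≤ cl * mnorm Q y) (x y : κ → ℝ) :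
    |x ⬝ᵥ (D - C * A⁻¹ * B) *ᵥ y| ≤ c₁ * cl ^ 2 * mnorm Q x * mnorm Q y := by
  rw [← schurLift_comp_inr A B x, ← dotProduct_fromBlocks_mulVec_schurLift hA]
  calc |schurLift A B x ⬝ᵥ fromBlocks A B C D *ᵥ schurLift A B y|
      ≤ c₁ * mnorm P (schurLift A B x) * mnorm P (schurLift A B y) := hbound _ _
    _ ≤ c₁ * (cl * mnorm Q x) * (cl * mnorm Q y) :=
        mul_le_mul (mul_le_mul_of_nonneg_left (hup x) hc₁) (hup y) (mnorm_nonneg _ _)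
          (mul_nonneg hc₁ (mul_nonneg hcl (mnorm_nonneg _ _)))
    _ = c₁ * cl ^ 2 * mnorm Q x * mnorm Q y := by ring

lemma exists_schurComplement_infsup [Nonempty κ] (hM : (fromBlocks A B C D).IsSymm)
    (hA : IsUnit A.det) (hP : P.PosDef) {c₂ : ℝ} (hc₂ : 0 < c₂)
    (hinfsup : ∀ x, ∃ y, y ≠ 0 ∧ c₂ * mnorm P x * mnorm P y ≤ x ⬝ᵥ fromBlocks A B C D *ᵥ y)
    (hQP : ∀ v, mnorm Q (v ∘ Sum.inr) ≤ mnorm P v) (x : κ → ℝ) :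
    ∃ y, y ≠ 0 ∧ c₂ * mnorm Q x * mnorm Q y ≤ x ⬝ᵥ (D - C * A⁻¹ * B) *ᵥ y := by
  rcases eq_or_ne x 0 with rfl | hx
  · obtain ⟨y, hy⟩ := exists_ne (0 : κ → ℝ)
    exact ⟨y, hy, by simp⟩
  obtain ⟨v, hv, hvx⟩ := hinfsup (schurLift A B x)
  rw [schurLift_dotProduct_fromBlocks_mulVec hM hA] at hvx
  have hpos : 0 < c₂ * mnorm P (schurLift A B x) * mnorm P v :=
    mul_pos (mul_pos hc₂ (mnorm_pos hP (schurLift_ne_zero hx))) (mnorm_pos hP hv)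
  refine ⟨v ∘ Sum.inr, fun hv₂ => ?_, hvx.trans' ?_⟩
  · rw [hv₂, mulVec_zero, dotProduct_zero] at hvx
    linarith
  · have hx' : mnorm Q x ≤ mnorm P (schurLift A B x) := hQP (schurLift A B x)
    exact mul_le_mul (mul_le_mul_of_nonneg_left hx' hc₂.le) (hQP v) (mnorm_nonneg _ _)
      (mul_nonneg hc₂.le (mnorm_nonneg _ _))

end SchurStability

theorem schur_complement_uniform_bounded_and_infsup_of_schur_precond_general
    (n m : ℕ) (hm : 1 ≤ m)
    (A₁₁ : Matrix (Fin n) (Fin n) ℝ) (A₂₁ : Matrix (Fin m) (Fin n) ℝ)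
    (A₂₂ : Matrix (Fin m) (Fin m) ℝ)
    (hAsymm : (Matrix.fromBlocks A₁₁ A₂₁ᵀ A₂₁ A₂₂).IsSymm)
    (hA₁₁ : IsUnit A₁₁.det)
    (P₁₁ : Matrix (Fin n) (Fin n) ℝ) (P₂₁ : Matrix (Fin m) (Fin n) ℝ)
    (P₂₂ : Matrix (Fin m) (Fin m) ℝ)
    (hP : (Matrix.fromBlocks P₁₁ P₂₁ᵀ P₂₁ P₂₂).PosDef)
    (c₁ c₂ cl : ℝ) (hc₁ : 0 < c₁) (hc₂ : 0 < c₂) (hcl : 0 < cl)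
    -- (i) uniform boundedness of the hybridizable system in the P-norm
    (hbound : ∀ x y : Fin n ⊕ Fin m → ℝ,
      |x ⬝ᵥ (Matrix.fromBlocks A₁₁ A₂₁ᵀ A₂₁ A₂₂).mulVec y| ≤
        c₁ * mnorm (Matrix.fromBlocks P₁₁ P₂₁ᵀ P₂₁ P₂₂) x *
          mnorm (Matrix.fromBlocks P₁₁ P₂₁ᵀ P₂₁ P₂₂) y)
    -- (ii) uniform inf-sup stability of the hybridizable system in the P-norm
    (hinfsup : ∀ x : Fin n ⊕ Fin m → ℝ, ∃ y : Fin n ⊕ Fin m → ℝ, y ≠ 0 ∧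
      c₂ * mnorm (Matrix.fromBlocks P₁₁ P₂₁ᵀ P₂₁ P₂₂) x *
          mnorm (Matrix.fromBlocks P₁₁ P₂₁ᵀ P₂₁ P₂₂) y ≤
        x ⬝ᵥ (Matrix.fromBlocks A₁₁ A₂₁ᵀ A₂₁ A₂₂).mulVec y)
    -- (iii) face-norm condition with respect to the Schur complement of P
    (hup : ∀ xb : Fin m → ℝ,
      mnorm (Matrix.fromBlocks P₁₁ P₂₁ᵀ P₂₁ P₂₂)
          (Sum.elim (-(A₁₁⁻¹.mulVec (A₂₁ᵀ.mulVec xb))) xb) ≤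
        cl * mnorm (P₂₂ - P₂₁ * P₁₁⁻¹ * P₂₁ᵀ) xb) :
    (∀ xb yb : Fin m → ℝ,
      |xb ⬝ᵥ (A₂₂ - A₂₁ * A₁₁⁻¹ * A₂₁ᵀ).mulVec yb| ≤
        c₁ * cl ^ 2 * mnorm (P₂₂ - P₂₁ * P₁₁⁻¹ * P₂₁ᵀ) xb *
          mnorm (P₂₂ - P₂₁ * P₁₁⁻¹ * P₂₁ᵀ) yb) ∧
    (∀ xb : Fin m → ℝ, ∃ yb : Fin m → ℝ, yb ≠ 0 ∧
      c₂ * mnorm (P₂₂ - P₂₁ * P₁₁⁻¹ * P₂₁ᵀ) xb * mnorm (P₂₂ - P₂₁ * P₁₁⁻¹ * P₂₁ᵀ) yb ≤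
        xb ⬝ᵥ (A₂₂ - A₂₁ * A₁₁⁻¹ * A₂₁ᵀ).mulVec yb) := by
  have : Nonempty (Fin m) := ⟨⟨0, hm⟩⟩
  exact ⟨abs_dotProduct_schurComplement_mulVec_le hA₁₁ hc₁.le hcl.le hbound hup,
    exists_schurComplement_infsup hAsymm hA₁₁ hP hc₂ hinfsup (mnorm_schurComplement_le hP)⟩

/-- Special case of the generalized face-norm condition theorem where the face inner
product is the Schur complement `S_P` of the full preconditioner `P` (Remark 2.2). -/
theorem schur_complement_uniform_bounded_and_infsup_of_schur_precond
    (n m : ℕ) (hn : 1 ≤ n) (hm : 1 ≤ m)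
    (A₁₁ : Matrix (Fin n) (Fin n) ℝ) (A₂₁ : Matrix (Fin m) (Fin n) ℝ)
    (A₂₂ : Matrix (Fin m) (Fin m) ℝ)
    (hAsymm : (Matrix.fromBlocks A₁₁ A₂₁ᵀ A₂₁ A₂₂).IsSymm)
    (hA₁₁ : IsUnit A₁₁.det)
    (P₁₁ : Matrix (Fin n) (Fin n) ℝ) (P₂₁ : Matrix (Fin m) (Fin n) ℝ)
    (P₂₂ : Matrix (Fin m) (Fin m) ℝ)
    (hP : (Matrix.fromBlocks P₁₁ P₂₁ᵀ P₂₁ P₂₂).PosDef)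
    (c₁ c₂ cl : ℝ) (hc₁ : 0 < c₁) (hc₂ : 0 < c₂) (hcl : 0 < cl)
    -- (i) uniform boundedness of the hybridizable system in the P-norm
    (hbound : ∀ x y : Fin n ⊕ Fin m → ℝ,
      |x ⬝ᵥ (Matrix.fromBlocks A₁₁ A₂₁ᵀ A₂₁ A₂₂).mulVec y| ≤
        c₁ * mnorm (Matrix.fromBlocks P₁₁ P₂₁ᵀ P₂₁ P₂₂) x *
          mnorm (Matrix.fromBlocks P₁₁ P₂₁ᵀ P₂₁ P₂₂) y)
    -- (ii) uniform inf-sup stability of the hybridizable system in the P-norm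
    (hinfsup : ∀ x : Fin n ⊕ Fin m → ℝ, ∃ y : Fin n ⊕ Fin m → ℝ, y ≠ 0 ∧
      c₂ * mnorm (Matrix.fromBlocks P₁₁ P₂₁ᵀ P₂₁ P₂₂) x *
          mnorm (Matrix.fromBlocks P₁₁ P₂₁ᵀ P₂₁ P₂₂) y ≤
        x ⬝ᵥ (Matrix.fromBlocks A₁₁ A₂₁ᵀ A₂₁ A₂₂).mulVec y)
    -- (iii) face-norm condition with respect to the Schur complement of P
    (hup : ∀ xb : Fin m → ℝ,
      mnorm (Matrix.fromBlocks P₁₁ P₂₁ᵀ P₂₁ P₂₂)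
          (Sum.elim (-(A₁₁⁻¹.mulVec (A₂₁ᵀ.mulVec xb))) xb) ≤
        cl * mnorm (P₂₂ - P₂₁ * P₁₁⁻¹ * P₂₁ᵀ) xb) :
    (∀ xb yb : Fin m → ℝ,
      |xb ⬝ᵥ (A₂₂ - A₂₁ * A₁₁⁻¹ * A₂₁ᵀ).mulVec yb| ≤
        c₁ * cl ^ 2 * mnorm (P₂₂ - P₂₁ * P₁₁⁻¹ * P₂₁ᵀ) xb *
          mnorm (P₂₂ - P₂₁ * P₁₁⁻¹ * P₂₁ᵀ) yb) ∧
    (∀ xb : Fin m → ℝ, ∃ yb : Fin m → ℝ, yb ≠ 0 ∧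
      c₂ * mnorm (P₂₂ - P₂₁ * P₁₁⁻¹ * P₂₁ᵀ) xb * mnorm (P₂₂ - P₂₁ * P₁₁⁻¹ * P₂₁ᵀ) yb ≤
        xb ⬝ᵥ (A₂₂ - A₂₁ * A₁₁⁻¹ * A₂₁ᵀ).mulVec yb) :=
  schur_complement_uniform_bounded_and_infsup_of_schur_precond_general n m hm A₁₁ A₂₁ A₂₂ hAsymm
    hA₁₁ P₁₁ P₂₁ P₂₂ hP c₁ c₂ cl hc₁ hc₂ hcl hbound hinfsup hup
end

section
/- Let B and C be symmetric positive definite real n×n matrices. Then for every q ∈ ℝⁿ, inf{q₁ᵀBq₁ + q₂ᵀCq₂ : q₁, q₂ ∈ ℝⁿ, q₁ + q₂ = q} = qᵀ(B⁻¹ + C⁻¹)⁻¹q. -/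
/-!
Write `w = (B⁻¹ + C⁻¹)⁻¹ q`. The split `q = p₁ + p₂` with `p₁ = B⁻¹w`, `p₂ = C⁻¹w` satisfies
`Bp₁ = Cp₂ = w`, which is the stationarity condition of the constrained minimisation: for any
other split `(p₁ + r, p₂ - r)` the cross terms `2 rᵀw - 2 rᵀw` cancel and the excess is
`rᵀBr + rᵀCr ≥ 0`. The minimum is `p₁ᵀw + p₂ᵀw = qᵀw`.
-/

open Matrix

namespace Matrix

variable {ι : Type*} [Fintype ι]

theorem mulVec_nonsing_inv_mulVec {R : Type*} [CommRing R] [DecidableEq ι] {A : Matrix ι ι R}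
    (hA : IsUnit A) (v : ι → R) : A *ᵥ (A⁻¹ *ᵥ v) = v := by
  rw [mulVec_mulVec, mul_nonsing_inv A ((isUnit_iff_isUnit_det A).mp hA), one_mulVec]

theorem IsSymm.dotProduct_mulVec_comm {R : Type*} [CommSemiring R] {B : Matrix ι ι R}
    (hB : B.IsSymm) (x y : ι → R) : x ⬝ᵥ B *ᵥ y = y ⬝ᵥ B *ᵥ x := by
  rw [dotProduct_mulVec, ← mulVec_transpose, hB.eq, dotProduct_comm]

theorem IsSymm.add_dotProduct_mulVec_add {R : Type*} [CommRing R] {B : Matrix ι ι R}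
    (hB : B.IsSymm) (x r : ι → R) :
    (x + r) ⬝ᵥ B *ᵥ (x + r) = x ⬝ᵥ B *ᵥ x + 2 * (r ⬝ᵥ B *ᵥ x) + r ⬝ᵥ B *ᵥ r := by
  simp only [mulVec_add, dotProduct_add, add_dotProduct, hB.dotProduct_mulVec_comm x r]
  ring

section TrivialStar

variable {R : Type*} [CommRing R] [PartialOrder R] [StarRing R] [TrivialStar R]

theorem PosSemidef.dotProduct_mulVec_self_nonneg {B : Matrix ι ι R}
    (hB : B.PosSemidef) (x : ι → R) : 0 ≤ x ⬝ᵥ B *ᵥ x := by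
  simpa using hB.dotProduct_mulVec_nonneg x

theorem PosSemidef.split_le_of_mulVec_eq [AddLeftMono R] {B C : Matrix ι ι R}
    (hB : B.PosSemidef) (hC : C.PosSemidef) {p₁ p₂ q₁ q₂ : ι → R}
    (hp : B *ᵥ p₁ = C *ᵥ p₂) (hq : q₁ + q₂ = p₁ + p₂) :
    p₁ ⬝ᵥ B *ᵥ p₁ + p₂ ⬝ᵥ C *ᵥ p₂ ≤ q₁ ⬝ᵥ B *ᵥ q₁ + q₂ ⬝ᵥ C *ᵥ q₂ := by
  obtain ⟨r, rfl⟩ : ∃ r, q₁ = p₁ + r := ⟨q₁ - p₁, (add_sub_cancel p₁ q₁).symm⟩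
  obtain rfl : q₂ = p₂ + -r := by linear_combination hq
  have hBsymm : B.IsSymm := isHermitian_iff_isSymm.mp hB.isHermitian
  have hCsymm : C.IsSymm := isHermitian_iff_isSymm.mp hC.isHermitian
  have hcross : r ⬝ᵥ B *ᵥ p₁ + -r ⬝ᵥ C *ᵥ p₂ = 0 := by rw [hp, neg_dotProduct, add_neg_cancel]
  have hexcess : (p₁ + r) ⬝ᵥ B *ᵥ (p₁ + r) + (p₂ + -r) ⬝ᵥ C *ᵥ (p₂ + -r) =
      p₁ ⬝ᵥ B *ᵥ p₁ + p₂ ⬝ᵥ C *ᵥ p₂ + (r ⬝ᵥ B *ᵥ r + -r ⬝ᵥ C *ᵥ -r) := by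
    rw [hBsymm.add_dotProduct_mulVec_add, hCsymm.add_dotProduct_mulVec_add]
    linear_combination 2 * hcross
  rw [hexcess]
  exact le_add_of_nonneg_right <|
    add_nonneg (hB.dotProduct_mulVec_self_nonneg r) (hC.dotProduct_mulVec_self_nonneg (-r))

end TrivialStar

theorem PosDef.isLeast_split_eq_parallel_sum {K : Type*} [Field K] [PartialOrder K]
    [StarRing K] [TrivialStar K] [AddLeftMono K] [DecidableEq ι] {B C : Matrix ι ι K}
    (hB : B.PosDef) (hC : C.PosDef) (q : ι → K) :
    IsLeast {t | ∃ q₁ q₂ : ι → K, q₁ + q₂ = q ∧ t = q₁ ⬝ᵥ B *ᵥ q₁ + q₂ ⬝ᵥ C *ᵥ q₂}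
      (q ⬝ᵥ (B⁻¹ + C⁻¹)⁻¹ *ᵥ q) := by
  set w := (B⁻¹ + C⁻¹)⁻¹ *ᵥ q
  have hBw : B *ᵥ (B⁻¹ *ᵥ w) = w := mulVec_nonsing_inv_mulVec hB.isUnit w
  have hCw : C *ᵥ (C⁻¹ *ᵥ w) = w := mulVec_nonsing_inv_mulVec hC.isUnit w
  have hsplit : B⁻¹ *ᵥ w + C⁻¹ *ᵥ w = q := by
    rw [← add_mulVec, mulVec_nonsing_inv_mulVec (hB.inv.add hC.inv).isUnit]
  have hvalue : (B⁻¹ *ᵥ w) ⬝ᵥ B *ᵥ (B⁻¹ *ᵥ w) + (C⁻¹ *ᵥ w) ⬝ᵥ C *ᵥ (C⁻¹ *ᵥ w) = q ⬝ᵥ w := by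
    rw [hBw, hCw, ← add_dotProduct, hsplit]
  refine ⟨⟨_, _, hsplit, hvalue.symm⟩, ?_⟩
  rintro t ⟨q₁, q₂, hq, rfl⟩
  rw [← hvalue]
  exact hB.posSemidef.split_le_of_mulVec_eq hC.posSemidef (hBw.trans hCw.symm)
    (hq.trans hsplit.symm)

end Matrix

/-- The infimum over splittings of the sum of two positive definite quadratic forms is
the quadratic form of the parallel sum `(B⁻¹ + C⁻¹)⁻¹` (Section 5.4). -/
theorem inf_splitting_eq_parallel_sum_form
    (n : ℕ) (B C : Matrix (Fin n) (Fin n) ℝ)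
    (hB : B.PosDef) (hC : C.PosDef) :
    ∀ q : Fin n → ℝ,
      sInf {t : ℝ | ∃ q₁ q₂ : Fin n → ℝ, q₁ + q₂ = q ∧
          t = q₁ ⬝ᵥ B.mulVec q₁ + q₂ ⬝ᵥ C.mulVec q₂} =
        q ⬝ᵥ (B⁻¹ + C⁻¹)⁻¹.mulVec q :=
  fun q => (hB.isLeast_split_eq_parallel_sum hC q).csInf_eq
end
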